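/- Let ℓ : ℝ → ℝ be convex and non-decreasing, let ρ > 0, r > 0, and let θ₁, θ₂ ∈ [0, π/4]. Then ℓ(ρ r sin θ₁) − ℓ(−ρ r sin θ₁) ≤ (2 sin θ₁ / (cos θ₂ + sin θ₁)) · (ℓ(ρ r cos θ₂) − ℓ(−ρ r cos θ₂)), provided sin θ₁ > 0. -/

import Mathlib

/-! By convexity, the slope of ℓ across `[-a, a]` is at most its slope across `[-a, b]` for
`a ≤ b`, and monotonicity lowers `ℓ (-a)` to `ℓ (-b)`. With `a = ρ r sin θ₁`, `b = ρ r cos θ₂`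
the factor `ρ r` cancels from the resulting coefficient `2a / (b + a)`; the hypothesis `a ≤ b`
is `sin θ₁ ≤ sin (π/4) = cos (π/4) ≤ cos θ₂`. -/

open Real Set

theorem ConvexOn.sub_neg_le_div_mul_sub_neg {ℓ : ℝ → ℝ} {a b : ℝ}
    (hconv : ConvexOn ℝ (Icc (-b) b) ℓ) (hmono : MonotoneOn ℓ (Icc (-b) b))
    (ha : 0 < a) (hab : a ≤ b) :
    ℓ a - ℓ (-a) ≤ 2 * a / (b + a) * (ℓ b - ℓ (-b)) := by
  have hb : b ∈ Icc (-b) b := right_mem_Icc.2 (by linarith)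
  have hnb : -b ∈ Icc (-b) b := left_mem_Icc.2 (by linarith)
  have ha' : a ∈ Icc (-b) b := ⟨by linarith, hab⟩
  have hna : -a ∈ Icc (-b) b := ⟨by linarith, by linarith⟩
  have hslope : (ℓ a - ℓ (-a)) / (a - -a) ≤ (ℓ b - ℓ (-a)) / (b - -a) :=
    hconv.secant_mono hna ha' hb (by linarith) (by linarith) hab
  have hleft : ℓ (-b) ≤ ℓ (-a) := hmono hnb hna (by linarith)
  rw [div_le_div_iff₀ (by linarith) (by linarith)] at hslope
  rw [div_mul_eq_mul_div, le_div_iff₀ (by linarith)]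
  linarith [mul_le_mul_of_nonneg_left hleft ha.le]

theorem Real.sin_le_cos_of_mem_Icc {θ₁ θ₂ : ℝ}
    (hθ₁ : θ₁ ∈ Icc 0 (π / 4)) (hθ₂ : θ₂ ∈ Icc 0 (π / 4)) : sin θ₁ ≤ cos θ₂ := by
  calc sin θ₁ ≤ sin (π / 4) :=
        sin_le_sin_of_le_of_le_pi_div_two (by linarith [pi_pos, hθ₁.1]) (by linarith [pi_pos])
          hθ₁.2
    _ = cos (π / 4) := by rw [sin_pi_div_four, cos_pi_div_four]
    _ ≤ cos θ₂ := cos_le_cos_of_nonneg_of_le_pi hθ₂.1 (by linarith [pi_pos]) hθ₂.2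

theorem stmt_8 (ℓ : ℝ → ℝ) (hconv : ConvexOn ℝ Set.univ ℓ) (hmono : Monotone ℓ)
    (ρ r θ₁ θ₂ : ℝ) (hρ : 0 < ρ) (hr : 0 < r)
    (hθ₁ : θ₁ ∈ Set.Icc 0 (Real.pi / 4)) (hθ₂ : θ₂ ∈ Set.Icc 0 (Real.pi / 4))
    (hsin : 0 < Real.sin θ₁) :
    ℓ (ρ * r * Real.sin θ₁) - ℓ (-(ρ * r * Real.sin θ₁))
      ≤ (2 * Real.sin θ₁ / (Real.cos θ₂ + Real.sin θ₁)) *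
        (ℓ (ρ * r * Real.cos θ₂) - ℓ (-(ρ * r * Real.cos θ₂))) := by
  have hρr : 0 < ρ * r := mul_pos hρ hr
  have hcoef : 2 * (ρ * r * sin θ₁) / (ρ * r * cos θ₂ + ρ * r * sin θ₁)
      = 2 * sin θ₁ / (cos θ₂ + sin θ₁) := by
    rw [← mul_add, mul_left_comm, mul_div_mul_left _ _ hρr.ne']
  rw [← hcoef]
  exact (hconv.subset (subset_univ _) (convex_Icc _ _)).sub_neg_le_div_mul_sub_neg
    (hmono.monotoneOn _) (mul_pos hρr hsin)
    (mul_le_mul_of_nonneg_left (sin_le_cos_of_mem_Icc hθ₁ hθ₂) hρr.le)
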